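/- arXiv:quant-ph/0702173 — 3 statements merged into one kernel-verified Lean document; each statement's English description precedes it below -/
import Mathlib

section
/- For every natural number N, the square of the N-th Krawtchouk matrix is 2^N times the identity matrix: (K^{(N)})² = 2^N · I, where I is the (N+1)×(N+1) identity matrix. -/
open Polynomial Finset

/-- The `(i,j)` entry of the `N`-th Krawtchouk matrix: the coefficient of `v^i`
in `(1+v)^(N-j) * (1-v)^j`.  (This is `0` automatically when `i > N`.) -/
noncomputable def kraw (N i j : ℕ) : ℤ :=
  ((1 + Polynomial.X) ^ (N - j) * (1 - Polynomial.X) ^ j : Polynomial ℤ).coeff i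

lemma kraw_key (N k : ℕ) (hk : k ≤ N) :
    ∑ j ∈ Finset.range (N + 1),
        Polynomial.C (kraw N j k) * ((1 + X) ^ (N - j) * (1 - X) ^ j : ℤ[X])
      = Polynomial.C ((2 : ℤ) ^ N) * X ^ k := by
  set φ : ℤ[X] →+* RatFunc ℚ :=
    (algebraMap ℚ[X] (RatFunc ℚ)).comp (Polynomial.mapRingHom (Int.castRingHom ℚ)) with hφdef
  have hφ : Function.Injective φ := by
    rw [hφdef, RingHom.coe_comp]
    exact (IsFractionRing.injective ℚ[X] (RatFunc ℚ)).comp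
      (Polynomial.map_injective (Int.castRingHom ℚ) Int.cast_injective)
  apply hφ
  set u : RatFunc ℚ := φ (1 + X) with hu
  set w : RatFunc ℚ := φ (1 - X) with hw
  set x : RatFunc ℚ := φ X with hx
  have hune : u ≠ 0 := fun h => by
    have h0 : φ (1 + X) = φ 0 := by rw [map_zero]; exact h
    simpa using congrArg (fun p => Polynomial.coeff p 0) (hφ h0)
  have hφ2 : φ 2 = 2 := map_ofNat φ 2
  have huw2 : u + w = 2 := by
    rw [hu, hw, ← map_add]
    have : ((1 + X) + (1 - X) : ℤ[X]) = 2 := by ring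
    rw [this, hφ2]
  have huwx : u - w = 2 * x := by
    rw [hu, hw, hx, ← map_sub]
    have : ((1 + X) - (1 - X) : ℤ[X]) = 2 * X := by ring
    rw [this, map_mul, hφ2]
  set t : RatFunc ℚ := w / u with ht
  have hdeg : ((1 + X) ^ (N - k) * (1 - X) ^ k : ℤ[X]).natDegree < N + 1 := by
    have h1 : ((1 + X : ℤ[X])).natDegree ≤ 1 := by
      refine le_trans (natDegree_add_le _ _) ?_; simp
    have h2 : ((1 - X : ℤ[X])).natDegree ≤ 1 := by
      refine le_trans (natDegree_sub_le _ _) ?_; simp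
    have hm := natDegree_mul_le (p := ((1 + X) ^ (N - k) : ℤ[X])) (q := ((1 - X) ^ k : ℤ[X]))
    have hp := natDegree_pow_le (p := (1 + X : ℤ[X])) (n := N - k)
    have hq := natDegree_pow_le (p := (1 - X : ℤ[X])) (n := k)
    have hp' : (N - k) * ((1 + X : ℤ[X])).natDegree ≤ (N - k) * 1 := Nat.mul_le_mul_left _ h1
    have hq' : k * ((1 - X : ℤ[X])).natDegree ≤ k * 1 := Nat.mul_le_mul_left _ h2
    omega
  have heval : Polynomial.eval₂ (φ.comp Polynomial.C) t ((1 + X) ^ (N - k) * (1 - X) ^ k : ℤ[X])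
      = ∑ j ∈ Finset.range (N + 1), φ (Polynomial.C (kraw N j k)) * t ^ j := by
    rw [Polynomial.eval₂_eq_sum_range' _ hdeg]
    simp [kraw]
  have heval2 : Polynomial.eval₂ (φ.comp Polynomial.C) t ((1 + X) ^ (N - k) * (1 - X) ^ k : ℤ[X])
      = (1 + t) ^ (N - k) * (1 - t) ^ k := by
    simp [Polynomial.eval₂_mul, Polynomial.eval₂_pow, Polynomial.eval₂_add,
      Polynomial.eval₂_sub, Polynomial.eval₂_one]
  have hsum : φ (∑ j ∈ Finset.range (N + 1),
      Polynomial.C (kraw N j k) * ((1 + X) ^ (N - j) * (1 - X) ^ j : ℤ[X]))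
      = u ^ N * ((1 + t) ^ (N - k) * (1 - t) ^ k) := by
    rw [map_sum, ← heval2, heval, Finset.mul_sum]
    refine Finset.sum_congr rfl fun j hj => ?_
    have hjN : j ≤ N := by simpa [Nat.lt_succ_iff] using hj
    rw [map_mul, map_mul, map_pow, map_pow, ← hu, ← hw]
    have : u ^ N = u ^ (N - j) * u ^ j := by
      rw [← pow_add]; congr 1; omega
    rw [ht, div_pow, this]
    field_simp
  rw [hsum]
  have h1t : 1 + t = 2 / u := by
    rw [ht]; field_simp; linear_combination huw2
  have h2t : 1 - t = 2 * x / u := by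
    rw [ht]; field_simp; linear_combination huwx
  have hRHS : (Polynomial.C ((2 : ℤ) ^ N) * X ^ k : ℤ[X]) = 2 ^ N * X ^ k := by
    norm_num
  rw [hRHS, h1t, h2t, map_mul, map_pow, map_pow, hφ2, ← hx]
  have huN : u ^ N = u ^ (N - k) * u ^ k := by
    rw [← pow_add]; congr 1; omega
  rw [div_pow, div_pow, huN, mul_pow]
  field_simp
  rw [← pow_add, show N - k + k = N by omega, mul_comm]

theorem krawtchouk_sq_eq_two_pow_smul_one (N : ℕ) :
    (Matrix.of fun i j : Fin (N + 1) => kraw N i j) *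
      (Matrix.of fun i j : Fin (N + 1) => kraw N i j) =
    (2 : ℤ) ^ N • (1 : Matrix (Fin (N + 1)) (Fin (N + 1)) ℤ) := by
  ext i k
  rw [Matrix.mul_apply]
  have hk : (k : ℕ) ≤ N := Nat.lt_succ_iff.mp k.isLt
  have key := kraw_key N k hk
  have hco := congrArg (fun p => Polynomial.coeff p (i : ℕ)) key
  simp only [Polynomial.finset_sum_coeff, Polynomial.coeff_C_mul,
    Polynomial.coeff_X_pow] at hco
  simp only [Matrix.of_apply, Matrix.smul_apply, Matrix.one_apply, smul_ite, smul_zero,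
    smul_eq_mul, mul_one]
  rw [Fin.sum_univ_eq_sum_range (fun j => kraw N ↑i j * kraw N j ↑k)]
  have h2 : ∑ j ∈ Finset.range (N + 1), kraw N ↑i j * kraw N j ↑k
      = 2 ^ N * if (↑i : ℕ) = ↑k then 1 else 0 := by
    rw [← hco]
    exact Finset.sum_congr rfl fun j _ => mul_comm _ _
  rw [h2]
  simp [Fin.ext_iff]
end

section
/- For every natural number N, all 0 ≤ i, j ≤ N, the i-th elementary symmetric function evaluated on a list of N values consisting of j copies of −1 and N−j copies of +1 equals the Krawtchouk matrix entry K^{(N)}_{ij}. -/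
open Polynomial

lemma reflect_X_add_C_pow (a : ℤ) (n : ℕ) :
    Polynomial.reflect n ((X + C a) ^ n) = (1 + C a * X) ^ n := by
  induction n with
  | zero => simp
  | succ n ih =>
    have h1 : ((X + C a) ^ n).natDegree ≤ n := by
      rw [natDegree_pow, natDegree_X_add_C, mul_one]
    have h2 : (X + C a).natDegree ≤ 1 := (natDegree_X_add_C a).le
    have := Polynomial.reflect_mul ((X + C a) ^ n) (X + C a) h1 h2
    rw [pow_succ, this, ih]
    have : Polynomial.reflect 1 (X + C a) = 1 + C a * X := by
      have hX : Polynomial.reflect 1 ((X : ℤ[X]) ^ 1) = X ^ revAt 1 1 :=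
        reflect_monomial 1 1
      have hC : Polynomial.reflect 1 (C a * X ^ 0) = C a * X ^ revAt 1 0 := by
        rw [Polynomial.reflect_C_mul_X_pow]
      simp only [pow_one, pow_zero, mul_one] at hX hC
      rw [Polynomial.reflect_add, hX, hC]
      norm_num [sub_eq_add_neg]
    rw [this, pow_succ]

theorem krawtchouk_eq_esymm (N i j : ℕ) (hi : i ≤ N) (hj : j ≤ N) :
    (Multiset.replicate j (-1 : ℤ) + Multiset.replicate (N - j) (1 : ℤ)).esymm i =
      kraw N i j := by
  set s : Multiset ℤ := Multiset.replicate j (-1 : ℤ) + Multiset.replicate (N - j) (1 : ℤ)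
  have hcard : Multiset.card s = N := by
    simp [s, Nat.add_sub_cancel' hj]
  have hQ : (s.map fun r => X + C r).prod
      = (X + C (-1 : ℤ)) ^ j * (X + C (1 : ℤ)) ^ (N - j) := by
    simp [s, Multiset.map_add, Multiset.map_replicate, Multiset.prod_replicate]
  have hk : N - i ≤ Multiset.card s := by omega
  have hvieta := Multiset.prod_X_add_C_coeff s hk
  rw [hQ, hcard, Nat.sub_sub_self hi] at hvieta
  -- Now relate kraw to the reflected polynomial
  have h1 : ((X + C (1 : ℤ)) ^ (N - j)).natDegree ≤ N - j := by
    rw [natDegree_pow, natDegree_X_add_C, mul_one]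
  have h2 : ((X + C (-1 : ℤ)) ^ j).natDegree ≤ j := by
    rw [natDegree_pow, natDegree_X_add_C, mul_one]
  have hrefl := Polynomial.reflect_mul ((X + C (1 : ℤ)) ^ (N - j)) ((X + C (-1 : ℤ)) ^ j) h1 h2
  rw [reflect_X_add_C_pow, reflect_X_add_C_pow] at hrefl
  have hNj : N - j + j = N := Nat.sub_add_cancel hj
  rw [hNj] at hrefl
  have : kraw N i j =
      ((X + C (1 : ℤ)) ^ (N - j) * (X + C (-1 : ℤ)) ^ j).coeff (N - i) := by
    unfold kraw
    rw [← revAt_le hi, ← Polynomial.coeff_reflect, hrefl]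
    norm_num [sub_eq_add_neg]
  rw [this, mul_comm, ← hvieta]
end

section
/- For every natural number N, let A be the (N+1)×(N+1) tridiagonal matrix with entries A_{i,i−1} = i for 1 ≤ i ≤ N, A_{i,i+1} = N − i for 0 ≤ i ≤ N−1, and all other entries 0, and let D be the diagonal matrix with entries D_{jj} = N − 2j for 0 ≤ j ≤ N. Then A · (K^{(N)})ᵀ = (K^{(N)})ᵀ · D. Consequently the spectrum of A is exactly {N, N−2, …, 2−N, −N}, coinciding with the support of the classical symmetric random walk at time N. -/
open Matrix

namespace KrawAux

open Polynomial

lemma coeff_XD (p : Polynomial ℤ) (j : ℕ) :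
    (X * derivative p).coeff j = (j : ℤ) * p.coeff j := by
  cases j with
  | zero => simp
  | succ n => rw [coeff_X_mul, coeff_derivative]; push_cast; ring

lemma coeff_target (n : ℤ) (p : Polynomial ℤ) (j : ℕ) :
    (C n * p - 2 * (X * derivative p)).coeff j = (n - 2 * j) * p.coeff j := by
  have : (2 * (X * derivative p) : Polynomial ℤ) = C 2 * (X * derivative p) := by
    simp
  rw [coeff_sub, coeff_C_mul, this, coeff_C_mul, coeff_XD]; ring

lemma Pmid (a b : ℕ) :
    C ((a:ℤ)+1) * ((1+X)^(b+2) * (1-X)^a) + C ((b:ℤ)+1) * ((1+X)^b * (1-X)^(a+2))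
      = C ((a:ℤ)+(b:ℤ)+2) * ((1+X)^(b+1) * (1-X)^(a+1))
        - 2 * (X * derivative ((1+X)^(b+1) * (1-X)^(a+1))) := by
  simp only [derivative_mul, derivative_pow, derivative_add, derivative_sub,
    derivative_one, derivative_X, Nat.add_sub_cancel, zero_add, zero_sub,
    mul_one]
  push_cast [← C_eq_natCast]
  ring_nf
  simp [C_add, C_1]
  ring

lemma P0 (b : ℕ) :
    C ((b:ℤ)+1) * ((1+X)^b * (1-X)^1)
      = C ((b:ℤ)+1) * ((1+X)^(b+1) * (1-X)^0)
        - 2 * (X * derivative ((1+X)^(b+1) * (1-X)^0)) := by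
  simp only [derivative_mul, derivative_pow, derivative_add, derivative_sub,
    derivative_one, derivative_X, Nat.add_sub_cancel, pow_zero, pow_one]
  push_cast [← C_eq_natCast]
  ring_nf

lemma PN (a : ℕ) :
    C ((a:ℤ)+1) * ((1+X)^1 * (1-X)^a)
      = C ((a:ℤ)+1) * ((1+X)^0 * (1-X)^(a+1))
        - 2 * (X * derivative ((1+X)^0 * (1-X)^(a+1))) := by
  simp only [derivative_mul, derivative_pow, derivative_add, derivative_sub,
    derivative_one, derivative_X, Nat.add_sub_cancel, pow_zero, pow_one]
  push_cast [← C_eq_natCast]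
  ring_nf

lemma keyZ (N j i : ℕ) (hiN : i ≤ N) :
    (i:ℤ) * kraw N j (i-1) + ((N:ℤ) - (i:ℤ)) * kraw N j (i+1)
      = ((N:ℤ) - 2*(j:ℤ)) * kraw N j i := by
  unfold kraw
  rcases i with _ | a
  · rcases N with _ | b
    · simp only [Nat.cast_zero, zero_mul, sub_zero, zero_add, Nat.zero_sub, pow_zero, one_mul]
      rcases j with _ | j
      · simp
      · simp [coeff_one]
    · have h := congrArg (fun p : Polynomial ℤ => p.coeff j) (P0 b)
      simp only [coeff_target, coeff_C_mul] at h
      simp only [Nat.cast_zero, zero_mul, zero_add, Nat.zero_sub, sub_zero,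
        Nat.add_sub_cancel, pow_zero, pow_one]
      try simp only [pow_zero, pow_one, one_mul, mul_one] at h ⊢
      push_cast at h ⊢
      linarith [h]
  · rcases Nat.lt_or_ge (a+1) N with hlt | hge
    · obtain ⟨b, rfl⟩ : ∃ b, N = a + b + 2 := ⟨N - a - 2, by omega⟩
      have h := congrArg (fun p : Polynomial ℤ => p.coeff j) (Pmid a b)
      simp only [coeff_target, coeff_add, coeff_C_mul] at h
      have e1 : a + b + 2 - (a + 1 - 1) = b + 2 := by omega
      have e2 : a + b + 2 - (a + 1 + 1) = b := by omega
      have e3 : a + b + 2 - (a + 1) = b + 1 := by omega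
      rw [e1, e2, e3]
      try simp only [pow_zero, pow_one, one_mul, mul_one] at h ⊢
      push_cast at h ⊢
      linarith [h]
    · have hN : N = a + 1 := le_antisymm hge hiN
      subst hN
      have h := congrArg (fun p : Polynomial ℤ => p.coeff j) (PN a)
      simp only [coeff_target, coeff_C_mul] at h
      have e1 : a + 1 - (a + 1 - 1) = 1 := by omega
      have e2 : a + 1 - (a + 1 + 1) = 0 := by omega
      have e3 : a + 1 - (a + 1) = 0 := by omega
      rw [e1, e2, e3]
      try simp only [pow_zero, pow_one, one_mul, mul_one] at h ⊢
      push_cast at h ⊢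
      linarith [h]

noncomputable def psi : Polynomial ℤ →+* RatFunc ℚ :=
  (algebraMap (Polynomial ℚ) (RatFunc ℚ)).comp (Polynomial.mapRingHom (Int.castRingHom ℚ))

lemma psi_inj : Function.Injective psi :=
  (RatFunc.algebraMap_injective ℚ).comp (Polynomial.map_injective _ Int.cast_injective)

lemma psi_X : psi X = RatFunc.X := by
  simp [psi, RatFunc.algebraMap_X]

lemma hxne : (1 : RatFunc ℚ) + RatFunc.X ≠ 0 := by
  have hP : (1 + X : Polynomial ℚ) ≠ 0 := by
    intro h; simpa using congrArg (Polynomial.eval 0) h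
  have : (1 : RatFunc ℚ) + RatFunc.X = algebraMap (Polynomial ℚ) (RatFunc ℚ) (1 + X) := by
    simp [RatFunc.algebraMap_X]
  rw [this]
  exact RatFunc.algebraMap_ne_zero hP

lemma psi_C (n : ℤ) : psi (C n) = ((n : ℚ) : RatFunc ℚ) := by
  have h2 : (C n : Polynomial ℤ) = (n : Polynomial ℤ) := by norm_cast
  rw [h2, map_intCast]
  norm_cast

lemma PP (N j : ℕ) (hj : j ≤ N) :
    ∑ k ∈ Finset.range (N+1), C (kraw N k j) * ((1+X)^(N-k) * (1-X)^k)
      = C ((2:ℤ)^N) * X^j := by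
  apply psi_inj
  rw [_root_.map_sum]
  set F := RatFunc ℚ
  set x : F := RatFunc.X with hxdef
  have hx : (1 : F) + x ≠ 0 := hxne
  have hψ : ∀ k, psi (C (kraw N k j) * ((1+X)^(N-k) * (1-X)^k))
      = ((kraw N k j : ℚ) : F) * ((1+x)^(N-k) * (1-x)^k) := by
    intro k
    rw [_root_.map_mul, _root_.map_mul, _root_.map_pow, _root_.map_pow, _root_.map_add, _root_.map_sub, _root_.map_one, psi_X, psi_C]
  simp only [hψ]
  set w : F := (1 - x) / (1 + x) with hw
  have step1 : ∀ k ∈ Finset.range (N+1), ((kraw N k j : ℚ) : F) * ((1+x)^(N-k) * (1-x)^k)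
      = (1+x)^N * (((kraw N k j : ℚ) : F) * w^k) := by
    intro k hk
    have hkN : k ≤ N := by simpa using Nat.lt_succ_iff.mp (Finset.mem_range.mp hk)
    have hpow : (1+x)^N = (1+x)^(N-k) * (1+x)^k := by
      rw [← pow_add, Nat.sub_add_cancel hkN]
    rw [hw, div_pow, hpow]
    rw [mul_div_assoc', mul_div_assoc', eq_div_iff (pow_ne_zero _ hx)]
    ring
  rw [Finset.sum_congr rfl step1, ← Finset.mul_sum]
  have hdeg : (((1+X)^(N-j) * (1-X)^j : Polynomial ℤ)).natDegree < N + 1 := by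
    have h1 : ((1+X : Polynomial ℤ)^(N-j)).natDegree ≤ (N-j) := by
      apply le_trans (natDegree_pow_le)
      have : (1 + X : Polynomial ℤ).natDegree ≤ 1 := by
        apply le_trans (natDegree_add_le _ _); simp
      nlinarith
    have h2 : ((1-X : Polynomial ℤ)^j).natDegree ≤ j := by
      apply le_trans (natDegree_pow_le)
      have : (1 - X : Polynomial ℤ).natDegree ≤ 1 := by
        apply le_trans (natDegree_sub_le _ _); simp
      nlinarith
    have := natDegree_mul_le (p := ((1+X : Polynomial ℤ))^(N-j)) (q := (1-X : Polynomial ℤ)^j)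
    omega
  have step3 : ∑ k ∈ Finset.range (N+1), ((kraw N k j : ℚ) : F) * w^k
      = Polynomial.eval₂ (Int.castRingHom F) w ((1+X)^(N-j) * (1-X)^j : Polynomial ℤ) := by
    rw [Polynomial.eval₂_eq_sum_range' _ hdeg]
    apply Finset.sum_congr rfl
    intro k _
    unfold kraw
    push_cast
    rfl
  rw [step3]
  rw [eval₂_mul, eval₂_pow, eval₂_pow, eval₂_add, eval₂_sub, eval₂_one, eval₂_X]
  have h1w : (1 : F) + w = 2 / (1+x) := by
    rw [hw]; rw [eq_div_iff hx, add_mul, div_mul_cancel₀ _ hx]; ring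
  have h2w : (1 : F) - w = 2 * x / (1+x) := by
    rw [hw]; rw [eq_div_iff hx, sub_mul, div_mul_cancel₀ _ hx]; ring
  obtain ⟨s, rfl⟩ : ∃ s, N = j + s := ⟨N - j, by omega⟩
  have hjs : j + s - j = s := by omega
  rw [hjs, h1w, h2w, div_pow, div_pow, mul_pow]
  rw [_root_.map_mul, psi_C, _root_.map_pow, psi_X]
  push_cast
  rw [div_mul_div_comm, mul_div_assoc', ← pow_add, add_comm s j, mul_div_cancel_left₀ _ (pow_ne_zero _ hx), hxdef]; ring

lemma kk (N i j : ℕ) (hj : j ≤ N) :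
    ∑ k ∈ Finset.range (N+1), kraw N i k * kraw N k j = if i = j then 2^N else 0 := by
  have h := congrArg (fun p : Polynomial ℤ => p.coeff i) (PP N j hj)
  simp only [finset_sum_coeff, coeff_C_mul, coeff_X_pow] at h
  calc ∑ k ∈ Finset.range (N+1), kraw N i k * kraw N k j
      = ∑ k ∈ Finset.range (N+1), kraw N k j * ((1+X)^(N-k) * (1-X)^k : Polynomial ℤ).coeff i :=
        Finset.sum_congr rfl (fun k _ => mul_comm _ _)
    _ = 2^N * (if i = j then 1 else 0) := h
    _ = if i = j then 2^N else 0 := by split_ifs <;> ring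

end KrawAux
-- matrix part (to be appended)
section MatrixPart

open KrawAux

variable (N : ℕ)

noncomputable def Amat : Matrix (Fin (N + 1)) (Fin (N + 1)) ℝ := Matrix.of fun i j =>
  if (j : ℕ) + 1 = (i : ℕ) then ((i : ℕ) : ℝ)
  else if (i : ℕ) + 1 = (j : ℕ) then (N : ℝ) - ((i : ℕ) : ℝ)
  else 0

noncomputable def Dmat : Matrix (Fin (N + 1)) (Fin (N + 1)) ℝ :=
  Matrix.diagonal fun j => (N : ℝ) - 2 * ((j : ℕ) : ℝ)

noncomputable def Kmat : Matrix (Fin (N + 1)) (Fin (N + 1)) ℝ :=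
  Matrix.of fun i j => (kraw N i j : ℝ)

lemma keyR (j i : ℕ) (hi : i ≤ N) :
    (i:ℝ) * (kraw N j (i-1) : ℝ) + ((N:ℝ) - i) * (kraw N j (i+1) : ℝ)
      = ((N:ℝ) - 2*j) * (kraw N j i : ℝ) := by
  have h := congrArg (Int.cast : ℤ → ℝ) (keyZ N j i hi)
  push_cast at h
  linarith [h]

lemma hAK : Amat N * (Kmat N)ᵀ = (Kmat N)ᵀ * Dmat N := by
  ext i j
  rw [Matrix.mul_apply, Dmat, Matrix.mul_diagonal]
  have hsplit : ∀ k : Fin (N+1), Amat N i k * (Kmat N)ᵀ k j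
      = (if (k:ℕ)+1 = (i:ℕ) then ((i:ℕ):ℝ) * (kraw N (j:ℕ) (k:ℕ) : ℝ) else 0)
      + (if (i:ℕ)+1 = (k:ℕ) then ((N:ℝ) - ((i:ℕ):ℝ)) * (kraw N (j:ℕ) (k:ℕ) : ℝ) else 0) := by
    intro k
    simp only [Amat, Kmat, Matrix.of_apply, Matrix.transpose_apply]
    split_ifs <;> first | omega | ring
  rw [Finset.sum_congr rfl (fun k _ => hsplit k), Finset.sum_add_distrib]
  have hS1 : (∑ k : Fin (N+1),
        if (k:ℕ)+1 = (i:ℕ) then ((i:ℕ):ℝ) * (kraw N (j:ℕ) (k:ℕ) : ℝ) else 0)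
      = ((i:ℕ):ℝ) * (kraw N (j:ℕ) ((i:ℕ)-1) : ℝ) := by
    rcases Nat.eq_zero_or_pos (i:ℕ) with h0 | h1
    · rw [h0]
      rw [Finset.sum_eq_zero]
      · simp
      · intro k _; rw [if_neg]; omega
    · have hk : (i:ℕ)-1 < N+1 := by omega
      rw [Finset.sum_eq_single (⟨(i:ℕ)-1, hk⟩ : Fin (N+1))]
      · rw [if_pos]; simp only [Fin.val_mk]; omega
      · intro b _ hb
        rw [if_neg]
        intro hcon
        exact hb (Fin.ext (by simp; omega))
      · intro h; exact absurd (Finset.mem_univ _) h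
  have hS2 : (∑ k : Fin (N+1),
        if (i:ℕ)+1 = (k:ℕ) then ((N:ℝ) - ((i:ℕ):ℝ)) * (kraw N (j:ℕ) (k:ℕ) : ℝ) else 0)
      = ((N:ℝ) - ((i:ℕ):ℝ)) * (kraw N (j:ℕ) ((i:ℕ)+1) : ℝ) := by
    rcases Nat.lt_or_ge (i:ℕ) N with hlt | hge
    · have hk : (i:ℕ)+1 < N+1 := by omega
      rw [Finset.sum_eq_single (⟨(i:ℕ)+1, hk⟩ : Fin (N+1))]
      · rw [if_pos]; simp only [Fin.val_mk]
      · intro b _ hb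
        rw [if_neg]
        intro hcon
        exact hb (Fin.ext (by simp; omega))
      · intro h; exact absurd (Finset.mem_univ _) h
    · have hiN : (i:ℕ) = N := by omega
      rw [Finset.sum_eq_zero]
      · rw [hiN]; simp
      · intro k _; rw [if_neg]; omega
  rw [hS1, hS2]
  have := keyR N (j:ℕ) (i:ℕ) (Nat.lt_succ_iff.mp i.isLt)
  simp only [Kmat, Matrix.transpose_apply, Matrix.of_apply]
  linarith [this]

lemma hKK : Kmat N * Kmat N = ((2:ℝ)^N) • (1 : Matrix (Fin (N+1)) (Fin (N+1)) ℝ) := by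
  ext i j
  rw [Matrix.mul_apply, Matrix.smul_apply, Matrix.one_apply]
  have h2 := congrArg (Int.cast : ℤ → ℝ) (kk N (i:ℕ) (j:ℕ) (Nat.lt_succ_iff.mp j.isLt))
  push_cast at h2
  rw [show (∑ k : Fin (N+1), Kmat N i k * Kmat N k j)
      = ∑ k ∈ Finset.range (N+1), (kraw N (i:ℕ) k : ℝ) * (kraw N k (j:ℕ) : ℝ) from
    Fin.sum_univ_eq_sum_range (fun m => (kraw N (i:ℕ) m : ℝ) * (kraw N m (j:ℕ) : ℝ)) (N+1)]
  rw [h2]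
  by_cases hij : (i:ℕ) = (j:ℕ)
  · rw [if_pos hij, if_pos (Fin.ext hij)]; simp
  · rw [if_neg hij, if_neg (fun h => hij (congrArg Fin.val h))]; simp

lemma spec : spectrum ℝ (Amat N) = {x : ℝ | ∃ j : ℕ, j ≤ N ∧ x = (N : ℝ) - 2 * (j : ℝ)} := by
  have h2N : ((2:ℝ)^N) ≠ 0 := by positivity
  have hKtKt : (Kmat N)ᵀ * (Kmat N)ᵀ = ((2:ℝ)^N) • 1 := by
    rw [← Matrix.transpose_mul, hKK, Matrix.transpose_smul, Matrix.transpose_one]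
  set u : (Matrix (Fin (N+1)) (Fin (N+1)) ℝ)ˣ :=
    { val := (Kmat N)ᵀ
      inv := ((2:ℝ)^N)⁻¹ • (Kmat N)ᵀ
      val_inv := by
        rw [Matrix.mul_smul, hKtKt, smul_smul, inv_mul_cancel₀ h2N, one_smul]
      inv_val := by
        rw [Matrix.smul_mul, hKtKt, smul_smul, inv_mul_cancel₀ h2N, one_smul] }
    with hu
  have hA : Amat N = u.val * Dmat N * (↑u⁻¹ : Matrix (Fin (N+1)) (Fin (N+1)) ℝ) := by
    have h1 : Amat N * u.val = u.val * Dmat N := hAK N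
    calc Amat N = Amat N * (u.val * (↑u⁻¹ : Matrix (Fin (N+1)) (Fin (N+1)) ℝ)) := by
          rw [Units.mul_inv, mul_one]
      _ = (Amat N * u.val) * (↑u⁻¹ : Matrix (Fin (N+1)) (Fin (N+1)) ℝ) := by rw [mul_assoc]
      _ = u.val * Dmat N * (↑u⁻¹ : Matrix (Fin (N+1)) (Fin (N+1)) ℝ) := by rw [h1]
  rw [hA, spectrum.units_conjugate, Dmat, _root_.spectrum_diagonal]
  ext x
  simp only [Set.mem_range, Set.mem_setOf_eq]
  constructor
  · rintro ⟨jf, hjf⟩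
    exact ⟨(jf:ℕ), Nat.lt_succ_iff.mp jf.isLt, hjf.symm⟩
  · rintro ⟨j0, hj0, rfl⟩
    exact ⟨⟨j0, by omega⟩, rfl⟩

end MatrixPart

/-- The tridiagonal matrix `A` (the symmetric representation of `X_F` in degree `N`)
is diagonalized by the transposed Krawtchouk matrix, its spectrum being
`{N, N-2, …, 2-N, -N}`. -/
theorem XF_symmetric_rep_diagonalized (N : ℕ) :
    let A : Matrix (Fin (N + 1)) (Fin (N + 1)) ℝ := Matrix.of fun i j =>
      if (j : ℕ) + 1 = (i : ℕ) then ((i : ℕ) : ℝ)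
      else if (i : ℕ) + 1 = (j : ℕ) then (N : ℝ) - ((i : ℕ) : ℝ)
      else 0
    let D : Matrix (Fin (N + 1)) (Fin (N + 1)) ℝ :=
      Matrix.diagonal fun j => (N : ℝ) - 2 * ((j : ℕ) : ℝ)
    let K : Matrix (Fin (N + 1)) (Fin (N + 1)) ℝ := Matrix.of fun i j => (kraw N i j : ℝ)
    A * Kᵀ = Kᵀ * D ∧
      spectrum ℝ A = {x : ℝ | ∃ j : ℕ, j ≤ N ∧ x = (N : ℝ) - 2 * (j : ℝ)} := by
  intro A D K
  exact ⟨hAK N, spec N⟩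
end
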